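/- arXiv:2409.13279 — 5 statements merged into one kernel-verified Lean document; each statement's English description precedes it below -/
import Mathlib

section
/- For a path P = (u₁, u₂, ..., u_k) with k ≥ 2 in a flow graph whose internal vertices satisfy flow conservation, the two expressions for the excess flow of P agree: f(u₁,u₂) − Σ_{i=2}^{k−1} Σ_{v ≠ u_{i+1}} f(u_i, v) = f(u_{k−1},u_k) − Σ_{i=2}^{k−1} Σ_{v ≠ u_{i−1}} f(v, u_i). -/
/-! Each leak sum at an internal vertex `u_i` is a total flow at `u_i` minus the flow on a path
edge. Conservation makes the total inflow and outflow cancel between the two expressions, and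
what remains is a telescoping sum of path-edge flows. -/

open scoped Classical

/-- A flow graph: a finite DAG (witnessed by a topological order) with a positive
flow on each edge (zero off edges) satisfying conservation at internal vertices. -/
structure FlowGraph (V : Type*) [Fintype V] [DecidableEq V] where
  E : Finset (V × V)
  f : V → V → ℝ
  pos : ∀ e ∈ E, 0 < f e.1 e.2
  zero_off : ∀ u v : V, (u, v) ∉ E → f u v = 0
  topo : V → ℕ
  topo_inj : Function.Injective topo
  topo_lt : ∀ e ∈ E, topo e.1 < topo e.2
  conserve : ∀ v : V, (∃ u, (u, v) ∈ E) → (∃ w, (v, w) ∈ E) →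
    (∑ u, f u v) = (∑ w, f v w)

namespace FlowGraph

variable {V : Type*} [Fintype V] [DecidableEq V] (G : FlowGraph V)

/-- total flow into a vertex -/
noncomputable def flowIn (v : V) : ℝ := ∑ u, G.f u v

/-- total flow out of a vertex -/
noncomputable def flowOut (v : V) : ℝ := ∑ w, G.f v w

def IsSource (v : V) : Prop := ∀ u, (u, v) ∉ G.E

def IsSink (v : V) : Prop := ∀ w, (v, w) ∉ G.E

/-- `p 0, p 1, ..., p k` is a path with `k` edges. -/
def IsPath (p : ℕ → V) (k : ℕ) : Prop := ∀ i < k, (p i, p (i + 1)) ∈ G.E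

/-- Excess flow of the path `p 0, ..., p k` (forward expression):
`f(u₁,u₂) − Σ_{i=2}^{k−1} Σ_{v ≠ u_{i+1}} f(u_i, v)`. -/
noncomputable def excess (p : ℕ → V) (k : ℕ) : ℝ :=
  G.f (p 0) (p 1) - ∑ i ∈ Finset.Ico 1 k,
    ∑ v ∈ Finset.univ.filter (fun v => v ≠ p (i + 1)), G.f (p i) v

/-- Excess flow of the path `p 0, ..., p k` (backward expression):
`f(u_{k−1},u_k) − Σ_{i=2}^{k−1} Σ_{v ≠ u_{i−1}} f(v, u_i)`. -/
noncomputable def excessB (p : ℕ → V) (k : ℕ) : ℝ :=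
  G.f (p (k - 1)) (p k) - ∑ i ∈ Finset.Ico 1 k,
    ∑ v ∈ Finset.univ.filter (fun v => v ≠ p (i - 1)), G.f v (p i)

/-- `(u,v)` is the unique maximum incoming edge of `v`. -/
def UniqueMaxIn (u v : V) : Prop :=
  (u, v) ∈ G.E ∧ ∀ w, (w, v) ∈ G.E → w ≠ u → G.f w v < G.f u v

/-- `(u,v)` is the unique maximum outgoing edge of `u`. -/
def UniqueMaxOut (u v : V) : Prop :=
  (u, v) ∈ G.E ∧ ∀ w, (u, w) ∈ G.E → w ≠ v → G.f u w < G.f u v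

end FlowGraph

/-- A flow graph with a unique source `s` and a unique sink `t`. -/
structure FlowNetwork (V : Type*) [Fintype V] [DecidableEq V] extends FlowGraph V where
  s : V
  t : V
  s_source : ∀ u, (u, s) ∉ E
  t_sink : ∀ w, (t, w) ∉ E
  s_unique : ∀ v : V, (∀ u, (u, v) ∉ E) → v = s
  t_unique : ∀ v : V, (∀ w, (v, w) ∉ E) → v = t

namespace FlowNetwork

variable {V : Type*} [Fintype V] [DecidableEq V]

/-- A flow decomposition: a finite family of positively weighted `s`-`t` paths whose
weights on each edge sum to the flow of that edge. -/
structure Decomp (N : FlowNetwork V) where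
  n : ℕ
  path : Fin n → ℕ → V
  len : Fin n → ℕ
  w : Fin n → ℝ
  w_pos : ∀ i, 0 < w i
  is_path : ∀ i, N.toFlowGraph.IsPath (path i) (len i)
  starts : ∀ i, path i 0 = N.s
  ends : ∀ i, path i (len i) = N.t
  covers : ∀ e ∈ N.E,
    (∑ i, ∑ j ∈ Finset.range (len i),
      if path i j = e.1 ∧ path i (j + 1) = e.2 then w i else 0) = N.f e.1 e.2

/-- `q 0..q l` occurs as a contiguous subpath of `p 0..p k`. -/
def Subpath (q : ℕ → V) (l : ℕ) (p : ℕ → V) (k : ℕ) : Prop :=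
  ∃ o, o + l ≤ k ∧ ∀ j ≤ l, p (o + j) = q j

/-- Total weight of decomposition paths containing `q 0..q l` as a subpath. -/
noncomputable def coverWeight (N : FlowNetwork V) (D : N.Decomp) (q : ℕ → V) (l : ℕ) : ℝ :=
  ∑ i, if Subpath q l (D.path i) (D.len i) then D.w i else 0

/-- `q 0..q l` is `w`-safe: every flow decomposition covers it with weight at least `w`. -/
def WSafe (N : FlowNetwork V) (q : ℕ → V) (l : ℕ) (w : ℝ) : Prop :=
  ∀ D : N.Decomp, w ≤ coverWeight N D q l

/-- `q 0..q l` is safe: in every flow decomposition it is a subpath of some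
(positively weighted) decomposition path. -/
def SafePath (N : FlowNetwork V) (q : ℕ → V) (l : ℕ) : Prop :=
  ∀ D : N.Decomp, ∃ i, Subpath q l (D.path i) (D.len i)

end FlowNetwork


theorem Finset.sum_filter_ne_eq_sum_sub {α M : Type*} [Fintype α] [DecidableEq α]
    [AddCommGroup M] (a : α) (g : α → M) :
    ∑ v ∈ Finset.univ.filter (fun v => v ≠ a), g v = ∑ v, g v - g a := by
  rw [Finset.filter_ne', Finset.sum_erase_eq_sub (Finset.mem_univ a)]

namespace FlowGraph

variable {V : Type*} [Fintype V] [DecidableEq V] (G : FlowGraph V)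

theorem sum_filter_ne_f_eq_flowOut_sub (u w : V) :
    ∑ v ∈ Finset.univ.filter (fun v => v ≠ w), G.f u v = G.flowOut u - G.f u w :=
  Finset.sum_filter_ne_eq_sum_sub w (G.f u)

theorem sum_filter_ne_f_eq_flowIn_sub (u w : V) :
    ∑ v ∈ Finset.univ.filter (fun v => v ≠ w), G.f v u = G.flowIn u - G.f w u :=
  Finset.sum_filter_ne_eq_sum_sub w (G.f · u)

theorem flowIn_eq_flowOut_of_isPath {p : ℕ → V} {k i : ℕ} (hp : G.IsPath p k)
    (hi : 1 ≤ i) (hik : i < k) : G.flowIn (p i) = G.flowOut (p i) := by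
  refine G.conserve (p i) ⟨p (i - 1), ?_⟩ ⟨p (i + 1), hp i hik⟩
  simpa [Nat.sub_add_cancel hi] using hp (i - 1) (by omega)

end FlowGraph

variable {V : Type*} [Fintype V] [DecidableEq V]

/-- The two expressions for the excess flow of a path agree. -/
theorem excess_expressions_agree (G : FlowGraph V) (p : ℕ → V) (k : ℕ)
    (hk : 1 ≤ k) (hp : G.IsPath p k) :
    G.f (p 0) (p 1) - (∑ i ∈ Finset.Ico 1 k,
        ∑ v ∈ Finset.univ.filter (fun v => v ≠ p (i + 1)), G.f (p i) v) =
    G.f (p (k - 1)) (p k) - (∑ i ∈ Finset.Ico 1 k,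
        ∑ v ∈ Finset.univ.filter (fun v => v ≠ p (i - 1)), G.f v (p i)) := by
  set e : ℕ → ℝ := fun i => G.f (p (i - 1)) (p i)
  have htel : (∑ i ∈ Finset.Ico 1 k,
        ∑ v ∈ Finset.univ.filter (fun v => v ≠ p (i - 1)), G.f v (p i)) -
      (∑ i ∈ Finset.Ico 1 k,
        ∑ v ∈ Finset.univ.filter (fun v => v ≠ p (i + 1)), G.f (p i) v) = e k - e 1 := by
    rw [← Finset.sum_sub_distrib, ← Finset.sum_Ico_sub e hk]
    refine Finset.sum_congr rfl fun i hi => ?_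
    obtain ⟨hi, hik⟩ := Finset.mem_Ico.mp hi
    rw [G.sum_filter_ne_f_eq_flowIn_sub, G.sum_filter_ne_f_eq_flowOut_sub,
      G.flowIn_eq_flowOut_of_isPath hp hi hik]
    simp only [e, Nat.add_sub_cancel]
    ring
  simp only [e, Nat.sub_self] at htel
  linarith
end

section
/- In a flow graph with unique source s and unique sink t, every path P with positive excess flow f_P > 0 is f_P-safe: in every flow decomposition, the decomposition paths containing P as a subpath have total weight at least f_P. -/
open scoped Classical

variable {V : Type*} [Fintype V] [DecidableEq V]

/-! Write each edge flow `f(a, b)` as the total weight of the decomposition paths through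
`(a, b)`. A decomposition path through the first edge of `P` either contains `P`, or it leaves
`P` at some internal vertex `u_i` along an edge `(u_i, v)` with `v ≠ u_{i+1}` (it cannot stop
inside `P`, since it ends at the sink and every internal vertex of `P` has an outgoing edge).
Summing over the decomposition, `f(u₁, u₂)` is at most the cover weight of `P` plus the flow
leaving `P`, which is `f_P ≤ coverWeight`. -/

open Finset

namespace FlowGraph

variable (G : FlowGraph V) {p q : ℕ → V} {k l : ℕ}

theorem IsPath.topo_lt (hp : G.IsPath p k) {i j : ℕ} (hij : i < j) (hj : j ≤ k) :
    G.topo (p i) < G.topo (p j) := by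
  induction j, hij using Nat.le_induction with
  | base => exact G.topo_lt _ (hp i (by omega))
  | succ j hij ih => exact (ih (by omega)).trans (G.topo_lt _ (hp j (by omega)))

theorem IsPath.eq_of_apply_eq (hp : G.IsPath p k) {i j : ℕ} (hi : i ≤ k) (hj : j ≤ k)
    (h : p i = p j) : i = j := by
  by_contra hne
  rcases Nat.lt_or_gt_of_ne hne with hij | hji
  · exact (hp.topo_lt G hij hj).ne (congrArg G.topo h)
  · exact (hp.topo_lt G hji hi).ne (congrArg G.topo h.symm)

/-- Along a path of a DAG each edge occurs at most once. -/
theorem IsPath.sum_ite_edge (hp : G.IsPath p k) (a b : V) (w : ℝ) :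
    (∑ j ∈ range k, if p j = a ∧ p (j + 1) = b then w else 0)
      = if ∃ j < k, p j = a ∧ p (j + 1) = b then w else 0 := by
  split_ifs with h
  · obtain ⟨j₀, hj₀, hpa, hpb⟩ := h
    rw [sum_eq_single_of_mem j₀ (mem_range.2 hj₀), if_pos ⟨hpa, hpb⟩]
    rintro j hj hne
    refine if_neg fun ⟨hja, _⟩ => hne ?_
    exact hp.eq_of_apply_eq G (mem_range.1 hj).le hj₀.le (hja.trans hpa.symm)
  · exact sum_eq_zero fun j hj => if_neg fun hc => h ⟨j, mem_range.1 hj, hc⟩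

theorem IsPath.subpath_of_forall_stay (hq : G.IsPath q l) (hsink : G.IsSink (p k)) {j : ℕ}
    (hj : j < k) (h0 : p j = q 0) (h1 : p (j + 1) = q 1)
    (hstay : ∀ m ∈ Ico 1 l, ∀ j' < k, p j' = q m → p (j' + 1) = q (m + 1)) :
    FlowNetwork.Subpath q l p k := by
  have follows : ∀ m ≤ l, j + m ≤ k ∧ p (j + m) = q m := by
    intro m hm
    induction m with
    | zero => exact ⟨hj.le, h0⟩
    | succ m ih =>
      obtain ⟨hjm, hpm⟩ := ih (by omega)
      rcases Nat.eq_zero_or_pos m with rfl | hm0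
      · exact ⟨hj, h1⟩
      have hjm' : j + m < k := by
        refine lt_of_le_of_ne hjm fun hk => hsink (q (m + 1)) ?_
        rw [← hk, hpm]
        exact hq m (by omega)
      exact ⟨hjm', hstay m (mem_Ico.2 ⟨hm0, by omega⟩) _ hjm' hpm⟩
  exact ⟨j, (follows l le_rfl).1, fun m hm => (follows m hm).2⟩

end FlowGraph

namespace FlowNetwork.Decomp

variable {N : FlowNetwork V} (D : N.Decomp)

noncomputable def edgeWeight (i : Fin D.n) (a b : V) : ℝ :=
  if ∃ j < D.len i, D.path i j = a ∧ D.path i (j + 1) = b then D.w i else 0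

theorem edgeWeight_nonneg (i : Fin D.n) (a b : V) : 0 ≤ D.edgeWeight i a b := by
  unfold edgeWeight
  split_ifs
  exacts [(D.w_pos i).le, le_rfl]

theorem edgeWeight_le (i : Fin D.n) (a b : V) : D.edgeWeight i a b ≤ D.w i := by
  unfold edgeWeight
  split_ifs
  exacts [le_rfl, (D.w_pos i).le]

theorem sum_edgeWeight (a b : V) : ∑ i, D.edgeWeight i a b = N.f a b := by
  by_cases hab : (a, b) ∈ N.E
  · rw [← D.covers (a, b) hab]
    exact sum_congr rfl fun i _ => ((D.is_path i).sum_ite_edge _ a b (D.w i)).symm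
  · rw [N.zero_off a b hab]
    refine sum_eq_zero fun i _ => if_neg ?_
    rintro ⟨j, hj, rfl, rfl⟩
    exact hab (D.is_path i j hj)

theorem edgeWeight_first_le {q : ℕ → V} {l : ℕ} (hq : N.IsPath q l) (i : Fin D.n) :
    D.edgeWeight i (q 0) (q 1) ≤
      (if Subpath q l (D.path i) (D.len i) then D.w i else 0) +
        ∑ m ∈ Ico 1 l, ∑ v ∈ univ.filter (fun v => v ≠ q (m + 1)),
          D.edgeWeight i (q m) v := by
  have hexit_nonneg : 0 ≤ ∑ m ∈ Ico 1 l,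
      ∑ v ∈ univ.filter (fun v => v ≠ q (m + 1)), D.edgeWeight i (q m) v :=
    sum_nonneg fun m _ => sum_nonneg fun v _ => D.edgeWeight_nonneg i _ v
  by_cases hs : Subpath q l (D.path i) (D.len i)
  · rw [if_pos hs]
    linarith [D.edgeWeight_le i (q 0) (q 1)]
  rw [if_neg hs, zero_add]
  by_cases hfirst : ∃ j < D.len i, D.path i j = q 0 ∧ D.path i (j + 1) = q 1
  swap
  · rwa [edgeWeight, if_neg hfirst]
  obtain ⟨j, hj, h0, h1⟩ := hfirst
  have hsink : N.IsSink (D.path i (D.len i)) := D.ends i ▸ N.t_sink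
  obtain ⟨m, hm, j', hj', hpm, hexit⟩ : ∃ m ∈ Ico 1 l, ∃ j' < D.len i,
      D.path i j' = q m ∧ D.path i (j' + 1) ≠ q (m + 1) := by
    by_contra! hstay
    exact hs (hq.subpath_of_forall_stay _ hsink hj h0 h1 hstay)
  calc D.edgeWeight i (q 0) (q 1)
      = D.edgeWeight i (q m) (D.path i (j' + 1)) := by
        rw [edgeWeight, edgeWeight, if_pos ⟨j, hj, h0, h1⟩, if_pos ⟨j', hj', hpm, rfl⟩]
    _ ≤ ∑ v ∈ univ.filter (fun v => v ≠ q (m + 1)), D.edgeWeight i (q m) v :=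
        single_le_sum (fun v _ => D.edgeWeight_nonneg i _ v)
          (mem_filter.2 ⟨mem_univ _, hexit⟩)
    _ ≤ _ := single_le_sum
          (f := fun m => ∑ v ∈ univ.filter (fun v => v ≠ q (m + 1)),
            D.edgeWeight i (q m) v)
          (fun m _ => sum_nonneg fun v _ => D.edgeWeight_nonneg i _ v) hm

end FlowNetwork.Decomp

theorem excess_pos_wsafe_general (N : FlowNetwork V) (q : ℕ → V) (l : ℕ)
    (hp : N.toFlowGraph.IsPath q l) :
    FlowNetwork.WSafe N q l (N.toFlowGraph.excess q l) := by
  intro D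
  have hexits : ∑ i, ∑ m ∈ Ico 1 l, ∑ v ∈ univ.filter (fun v => v ≠ q (m + 1)),
        D.edgeWeight i (q m) v
      = ∑ m ∈ Ico 1 l, ∑ v ∈ univ.filter (fun v => v ≠ q (m + 1)), N.f (q m) v := by
    rw [sum_comm]
    refine sum_congr rfl fun m _ => ?_
    rw [sum_comm]
    exact sum_congr rfl fun v _ => D.sum_edgeWeight _ v
  have hsum := sum_le_sum fun i (_ : i ∈ univ) => D.edgeWeight_first_le hp i
  rw [sum_add_distrib, D.sum_edgeWeight, hexits] at hsum
  rw [FlowNetwork.coverWeight, FlowGraph.excess]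
  linarith

/-- A path with positive excess flow `f_P` is `f_P`-safe: in every flow decomposition,
the decomposition paths containing it as a subpath have total weight at least `f_P`. -/
theorem excess_pos_wsafe (N : FlowNetwork V) (q : ℕ → V) (l : ℕ)
    (hl : 1 ≤ l) (hp : N.toFlowGraph.IsPath q l)
    (hpos : 0 < N.toFlowGraph.excess q l) :
    FlowNetwork.WSafe N q l (N.toFlowGraph.excess q l) :=
  excess_pos_wsafe_general N q l hp
end

section
/- In a flow graph with unique source and sink, a path of length at least 2 whose excess flow is non-positive is not safe: there exists a flow decomposition in which no decomposition path contains it as a subpath, provided flow decompositions exist. -/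
open scoped Classical

open Finset Relation

section RelPath

variable {α : Type*} {R S : α → α → Prop}

def IsRelPath (R : α → α → Prop) (p : ℕ → α) (k : ℕ) : Prop :=
  ∀ i < k, R (p i) (p (i + 1))

theorem IsRelPath.mono (hRS : ∀ a b, R a b → S a b) {p : ℕ → α} {k : ℕ}
    (hp : IsRelPath R p k) : IsRelPath S p k :=
  fun i hi => hRS _ _ (hp i hi)

theorem exists_isRelPath_of_reflTransGen {a b : α} (h : ReflTransGen R a b) :
    ∃ p k, p 0 = a ∧ p k = b ∧ IsRelPath R p k := by
  induction h using ReflTransGen.head_induction_on with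
  | refl => exact ⟨fun _ => b, 0, rfl, rfl, fun i hi => absurd hi (Nat.not_lt_zero i)⟩
  | head hac _ ih =>
    obtain ⟨p, k, hp0, hpk, hp⟩ := ih
    refine ⟨fun | 0 => _ | i + 1 => p i, k + 1, rfl, hpk, ?_⟩
    rintro (_ | i) hi
    · simpa [hp0] using hac
    · exact hp i (by omega)

theorem exists_isRelPath_through {a b c : α} (hab : ReflTransGen R a b)
    (hbc : ReflTransGen R b c) :
    ∃ p k j, j ≤ k ∧ p 0 = a ∧ p j = b ∧ p k = c ∧ IsRelPath R p k := by
  induction hab using ReflTransGen.head_induction_on with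
  | refl =>
    obtain ⟨p, k, hp0, hpk, hp⟩ := exists_isRelPath_of_reflTransGen hbc
    exact ⟨p, k, 0, k.zero_le, hp0, hp0, hpk, hp⟩
  | head hac _ ih =>
    obtain ⟨p, k, j, hjk, hp0, hpj, hpk, hp⟩ := ih
    refine ⟨fun | 0 => _ | i + 1 => p i, k + 1, j + 1, by omega, rfl, hpj, hpk, ?_⟩
    rintro (_ | i) hi
    · simpa [hp0] using hac
    · exact hp i (by omega)

end RelPath

namespace FlowGraph

variable {V : Type*} [Fintype V] [DecidableEq V] {G : FlowGraph V} {p : ℕ → V} {k : ℕ}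

theorem IsPath.strictMonoOn_topo (hp : G.IsPath p k) :
    StrictMonoOn (fun i => G.topo (p i)) (Set.Iic k) := by
  intro i _ j hj hij
  induction j, hij using Nat.le_induction with
  | base => exact G.topo_lt _ (hp i hj)
  | succ j _ ih => exact (ih (Nat.le_of_succ_le hj)).trans (G.topo_lt _ (hp j hj))

theorem IsPath.injOn (hp : G.IsPath p k) : Set.InjOn p (Set.Iic k) :=
  Set.InjOn.of_comp (g := G.topo) hp.strictMonoOn_topo.injOn

end FlowGraph

section PathFlow

variable {V : Type*} [DecidableEq V] (p : ℕ → V) (k : ℕ) (w : ℝ)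

noncomputable def pathFlow (u v : V) : ℝ :=
  ∑ j ∈ range k, if p j = u ∧ p (j + 1) = v then w else 0

variable {p k w}

theorem pathFlow_nonneg (hw : 0 ≤ w) (u v : V) : 0 ≤ pathFlow p k w u v :=
  sum_nonneg fun _ _ => by split_ifs <;> simp [hw]

theorem pathFlow_eq_zero {u v : V} (h : ∀ j < k, ¬ (p j = u ∧ p (j + 1) = v)) :
    pathFlow p k w u v = 0 :=
  sum_eq_zero fun j hj => if_neg (h j (mem_range.1 hj))

theorem le_pathFlow (hw : 0 ≤ w) {j : ℕ} (hj : j < k) : w ≤ pathFlow p k w (p j) (p (j + 1)) := by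
  have := single_le_sum (f := fun i => if p i = p j ∧ p (i + 1) = p (j + 1) then w else 0)
    (fun i _ => by split_ifs <;> simp [hw]) (mem_range.2 hj)
  unfold pathFlow
  simpa using this

theorem sum_pathFlow_left [Fintype V] (v : V) :
    ∑ u, pathFlow p k w u v = ∑ j ∈ range k, if p (j + 1) = v then w else 0 := by
  simp only [pathFlow, ite_and]
  rw [sum_comm]
  simp

theorem sum_pathFlow_right [Fintype V] (u : V) :
    ∑ v, pathFlow p k w u v = ∑ j ∈ range k, if p j = u then w else 0 := by
  simp only [pathFlow, ite_and]
  rw [sum_comm]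
  refine sum_congr rfl fun j _ => ?_
  split_ifs <;> simp

theorem sum_pathFlow_left_eq_right [Fintype V] {v : V} (h0 : p 0 ≠ v) (hk : p k ≠ v) :
    ∑ u, pathFlow p k w u v = ∑ x, pathFlow p k w v x := by
  have h := (sum_range_succ' (fun j => if p j = v then w else 0) k).symm.trans
    (sum_range_succ _ k)
  rw [sum_pathFlow_left, sum_pathFlow_right]
  simpa [h0, hk] using h

theorem sum_pathFlow_right_le [Fintype V] (hinj : Set.InjOn p (Set.Iio k)) (hw : 0 ≤ w) (u : V) :
    ∑ v, pathFlow p k w u v ≤ w := by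
  rw [sum_pathFlow_right]
  by_cases h : ∃ j < k, p j = u
  · obtain ⟨j, hj, rfl⟩ := h
    rw [sum_eq_single_of_mem j (mem_range.2 hj) fun i hi hij =>
      if_neg fun he => hij (hinj (mem_range.1 hi) hj he)]
    simp
  · rw [sum_eq_zero fun j hj => if_neg fun he => h ⟨j, mem_range.1 hj, he⟩]
    exact hw

theorem pathFlow_le [Fintype V] (hinj : Set.InjOn p (Set.Iio k)) (hw : 0 ≤ w) (u v : V) :
    pathFlow p k w u v ≤ w :=
  (single_le_sum (fun x _ => pathFlow_nonneg hw u x) (mem_univ v)).trans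
    (sum_pathFlow_right_le hinj hw u)

end PathFlow

namespace FlowNetwork

variable {V : Type*} [Fintype V] [DecidableEq V] {N : FlowNetwork V}

structure PathFamily (N : FlowNetwork V) where
  n : ℕ
  path : Fin n → ℕ → V
  len : Fin n → ℕ
  w : Fin n → ℝ
  w_pos : ∀ i, 0 < w i
  is_path : ∀ i, N.IsPath (path i) (len i)
  starts : ∀ i, path i 0 = N.s
  ends : ∀ i, path i (len i) = N.t

namespace PathFamily

noncomputable def flow (P : PathFamily N) (u v : V) : ℝ :=
  ∑ i, pathFlow (P.path i) (P.len i) (P.w i) u v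

def empty (N : FlowNetwork V) : PathFamily N :=
  ⟨0, finZeroElim, finZeroElim, finZeroElim, finZeroElim, finZeroElim, finZeroElim, finZeroElim⟩

theorem flow_empty : (empty N).flow = 0 := by
  funext u v
  exact Fin.sum_univ_zero _

def cons (P : PathFamily N) {p : ℕ → V} {k : ℕ} {w : ℝ} (hw : 0 < w) (hp : N.IsPath p k)
    (h0 : p 0 = N.s) (hk : p k = N.t) : PathFamily N where
  n := P.n + 1
  path := Fin.cons p P.path
  len := Fin.cons k P.len
  w := Fin.cons w P.w
  w_pos := Fin.cases hw P.w_pos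
  is_path := Fin.cases hp P.is_path
  starts := Fin.cases h0 P.starts
  ends := Fin.cases hk P.ends

theorem flow_cons (P : PathFamily N) {p : ℕ → V} {k : ℕ} {w : ℝ} (hw : 0 < w)
    (hp : N.IsPath p k) (h0 : p 0 = N.s) (hk : p k = N.t) :
    (P.cons hw hp h0 hk).flow = pathFlow p k w + P.flow := by
  funext u v
  exact Fin.sum_univ_succ (n := P.n) _

def toDecomp (P : PathFamily N) (h : P.flow = N.f) : N.Decomp :=
  { P with covers := fun e _ => congrFun (congrFun h e.1) e.2 }

end PathFamily

/-- What is left of the flow of `N` after some `s`-`t` paths have been stripped off it. -/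
structure STFlow (N : FlowNetwork V) where
  r : V → V → ℝ
  nonneg : ∀ u v, 0 ≤ r u v
  supp : ∀ u v, (u, v) ∉ N.E → r u v = 0
  conserve : ∀ v, v ≠ N.s → v ≠ N.t → ∑ u, r u v = ∑ w, r v w

def toSTFlow (N : FlowNetwork V) : STFlow N where
  r := N.f
  nonneg u v := by
    by_cases h : (u, v) ∈ N.E
    · exact (N.pos _ h).le
    · exact (N.zero_off u v h).ge
  supp := N.zero_off
  conserve v hs ht := N.conserve v
    (by by_contra! h; exact hs (N.s_unique v h))
    (by by_contra! h; exact ht (N.t_unique v h))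

namespace STFlow

variable (F : STFlow N)

noncomputable def support : Finset (V × V) := univ.filter fun e => 0 < F.r e.1 e.2

variable {F}

theorem mem_support {e : V × V} : e ∈ F.support ↔ 0 < F.r e.1 e.2 := by
  simp [support]

theorem mem_E_of_pos {u v : V} (h : 0 < F.r u v) : (u, v) ∈ N.E := by
  by_contra hE
  exact h.ne' (F.supp u v hE)

theorem exists_pos_out_of_pos {u v : V} (h : 0 < F.r u v) (hv : v ≠ N.t) :
    ∃ w, 0 < F.r v w := by
  have hs : v ≠ N.s := fun hvs => N.s_source u (hvs ▸ F.mem_E_of_pos h)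
  have hin : ∑ _x : V, (0 : ℝ) < ∑ x, F.r x v := by
    simpa using (single_le_sum (fun x _ => F.nonneg x v) (mem_univ u)).trans_lt' h
  rw [F.conserve v hs hv] at hin
  simpa using exists_lt_of_sum_lt hin

theorem exists_pos_in_of_pos {v w : V} (h : 0 < F.r v w) (hv : v ≠ N.s) :
    ∃ u, 0 < F.r u v := by
  have ht : v ≠ N.t := fun hvt => N.t_sink w (hvt ▸ F.mem_E_of_pos h)
  have hout : ∑ _x : V, (0 : ℝ) < ∑ x, F.r v x := by
    simpa using (single_le_sum (fun x _ => F.nonneg v x) (mem_univ w)).trans_lt' h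
  rw [← F.conserve v hv ht] at hout
  simpa using exists_lt_of_sum_lt hout

theorem reflTransGen_to_sink (R : V → V → Prop)
    (hR : ∀ x, x ≠ N.t → (∃ y, 0 < F.r x y) → ∃ y, 0 < F.r x y ∧ R x y)
    {x : V} (hx : x = N.t ∨ ∃ y, 0 < F.r x y) :
    ReflTransGen (fun a b => 0 < F.r a b ∧ R a b) x N.t := by
  obtain ⟨M, hM⟩ : ∃ M, ∀ y, N.topo y ≤ M := ⟨univ.sup N.topo, fun y => le_sup (mem_univ y)⟩
  induction hn : M - N.topo x using Nat.strong_induction_on generalizing x with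
  | _ n ih =>
  obtain rfl | hxt := eq_or_ne x N.t
  · exact .refl
  obtain ⟨y, hy, hRy⟩ := hR x hxt (hx.resolve_left hxt)
  have hlt : N.topo x < N.topo y := N.topo_lt _ (F.mem_E_of_pos hy)
  have hy' : y = N.t ∨ ∃ z, 0 < F.r y z := or_iff_not_imp_left.2 (F.exists_pos_out_of_pos hy)
  exact .head ⟨hy, hRy⟩ (ih _ (by have := hM y; omega) hy' rfl)

theorem reflTransGen_from_source {x : V} (hx : x = N.s ∨ ∃ u, 0 < F.r u x) :
    ReflTransGen (fun a b => 0 < F.r a b ∧ N.topo b ≤ N.topo x) N.s x := by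
  induction hn : N.topo x using Nat.strong_induction_on generalizing x with
  | _ n ih =>
  obtain rfl | hxs := eq_or_ne x N.s
  · exact .refl
  obtain ⟨u, hu⟩ := hx.resolve_left hxs
  have hlt : N.topo u < N.topo x := N.topo_lt _ (F.mem_E_of_pos hu)
  have hu' : u = N.s ∨ ∃ w, 0 < F.r w u := or_iff_not_imp_left.2 (F.exists_pos_in_of_pos hu)
  refine .tail (ReflTransGen.mono (fun a b hab => ⟨hab.1, ?_⟩) _ _ (ih _ (hn ▸ hlt) hu' rfl))
    ⟨hu, hn.le⟩
  exact hab.2.trans (hn ▸ hlt.le)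

theorem exists_pos_from_source {u v : V} (h : 0 < F.r u v) : ∃ w, 0 < F.r N.s w := by
  have hu : u = N.s ∨ ∃ w, 0 < F.r w u := or_iff_not_imp_left.2 (F.exists_pos_in_of_pos h)
  rcases (F.reflTransGen_from_source hu).cases_head with hsu | ⟨w, hw, -⟩
  · exact ⟨v, hsu ▸ h⟩
  · exact ⟨w, hw.1⟩

variable {p : ℕ → V} {k : ℕ} {δ : ℝ}

theorem isPath_of_pos (hp : IsRelPath (fun u v => 0 < F.r u v) p k) : N.IsPath p k :=
  fun j hj => F.mem_E_of_pos (hp j hj)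

variable (F) in
noncomputable def strip (hp : IsRelPath (fun u v => 0 < F.r u v) p k) (h0 : p 0 = N.s)
    (hk : p k = N.t) (hδ : 0 ≤ δ) (hδle : ∀ j < k, δ ≤ F.r (p j) (p (j + 1))) : STFlow N where
  r := F.r - pathFlow p k δ
  nonneg u v := by
    have hinj := (isPath_of_pos hp).injOn.mono Set.Iio_subset_Iic_self
    by_cases h : ∃ j < k, p j = u ∧ p (j + 1) = v
    · obtain ⟨j, hj, rfl, rfl⟩ := h
      simpa using (pathFlow_le hinj hδ _ _).trans (hδle j hj)
    · simpa [pathFlow_eq_zero fun j hj h' => h ⟨j, hj, h'⟩] using F.nonneg u v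
  supp u v huv := by
    rw [Pi.sub_apply, Pi.sub_apply, F.supp u v huv, pathFlow_eq_zero, sub_zero]
    rintro j hj ⟨rfl, rfl⟩
    exact huv (F.mem_E_of_pos (hp j hj))
  conserve v hs ht := by
    simp only [Pi.sub_apply, sum_sub_distrib, F.conserve v hs ht,
      sum_pathFlow_left_eq_right (h0 ▸ hs.symm) (hk ▸ ht.symm)]

theorem card_support_strip_lt (hp : IsRelPath (fun u v => 0 < F.r u v) p k) (h0 : p 0 = N.s)
    (hk : p k = N.t) (hδ : 0 ≤ δ) (hδle : ∀ j < k, δ ≤ F.r (p j) (p (j + 1))) {j : ℕ}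
    (hj : j < k) (hδj : F.r (p j) (p (j + 1)) = δ) :
    (F.strip hp h0 hk hδ hδle).support.card < F.support.card := by
  have hsub : (F.strip hp h0 hk hδ hδle).support ⊆ F.support := by
    intro e he
    rw [mem_support] at he ⊢
    change 0 < F.r e.1 e.2 - pathFlow p k δ e.1 e.2 at he
    linarith [pathFlow_nonneg hδ (p := p) (k := k) e.1 e.2]
  refine card_lt_card ((ssubset_iff_of_subset hsub).2 ⟨(p j, p (j + 1)), ?_, ?_⟩)
  · exact mem_support.2 (hp j hj)
  · rw [mem_support]
    change ¬ 0 < F.r (p j) (p (j + 1)) - pathFlow p k δ (p j) (p (j + 1))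
    linarith [le_pathFlow hδ (p := p) hj]

variable (F) in
def HasStripPath (Inv : (V → V → ℝ) → Prop) (Good : (ℕ → V) → ℕ → Prop) : Prop :=
  ∃ p k, p 0 = N.s ∧ p k = N.t ∧ IsRelPath (fun u v => 0 < F.r u v) p k ∧ Good p k ∧
    ∀ δ, 0 ≤ δ → (∀ j < k, δ ≤ F.r (p j) (p (j + 1))) → Inv (F.r - pathFlow p k δ)

theorem exists_pathFamily {Inv : (V → V → ℝ) → Prop} {Good : (ℕ → V) → ℕ → Prop}
    (step : ∀ F : STFlow N, Inv F.r → (∃ u v, 0 < F.r u v) → F.HasStripPath Inv Good)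
    (F : STFlow N) (hF : Inv F.r) :
    ∃ P : PathFamily N, P.flow = F.r ∧ ∀ i, Good (P.path i) (P.len i) := by
  induction hn : F.support.card using Nat.strong_induction_on generalizing F with
  | _ n ih =>
  by_cases hpos : ∃ u v, 0 < F.r u v
  swap
  · simp only [not_exists, not_lt] at hpos
    refine ⟨PathFamily.empty N, ?_, finZeroElim⟩
    rw [PathFamily.flow_empty]
    funext u v
    exact (le_antisymm (hpos u v) (F.nonneg u v)).symm
  obtain ⟨p, k, h0, hk, hp, hgood, hinv⟩ := step F hF hpos
  have hk0 : 0 < k := by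
    obtain ⟨u, v, huv⟩ := hpos
    obtain ⟨w, hw⟩ := F.exists_pos_from_source huv
    refine Nat.pos_of_ne_zero fun hk0 => N.t_sink w ?_
    rw [← hk, hk0, h0]
    exact F.mem_E_of_pos hw
  obtain ⟨j, hj, hmin⟩ := exists_min_image (range k) (fun j => F.r (p j) (p (j + 1)))
    (nonempty_range_iff.2 hk0.ne')
  have hj := mem_range.1 hj
  have hδ : 0 < F.r (p j) (p (j + 1)) := hp j hj
  have hδle : ∀ i < k, F.r (p j) (p (j + 1)) ≤ F.r (p i) (p (i + 1)) :=
    fun i hi => hmin i (mem_range.2 hi)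
  obtain ⟨P, hP, hgoodP⟩ := ih _ (hn ▸ card_support_strip_lt hp h0 hk hδ.le hδle hj rfl)
    (F.strip hp h0 hk hδ.le hδle) (hinv _ hδ.le hδle) rfl
  refine ⟨P.cons hδ (isPath_of_pos hp) h0 hk, ?_, Fin.cases hgood hgoodP⟩
  rw [PathFamily.flow_cons, hP]
  exact add_sub_cancel _ _

end STFlow

end FlowNetwork

section Leak

variable {V : Type*} [Fintype V] [DecidableEq V] (q : ℕ → V) (l : ℕ)

noncomputable def leak (r : V → V → ℝ) : ℝ :=
  ∑ i ∈ Ico 1 l, ∑ v ∈ univ.filter (fun v => v ≠ q (i + 1)), r (q i) v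

theorem FlowGraph.excess_eq_sub_leak (G : FlowGraph V) :
    G.excess q l = G.f (q 0) (q 1) - leak q l G.f :=
  rfl

/-- The invariant kept while stripping paths: either an edge of `q` is exhausted, or the flow
entering `q` through its first edge can all escape through side exits of its interior. -/
def Blocked (r : V → V → ℝ) : Prop :=
  r (q 0) (q 1) ≤ leak q l r ∨ ∃ m < l, r (q m) (q (m + 1)) = 0

/-- A step `x → y` that follows `q`, except at `q m`, where it leaves `q`. -/
def ExitsAt (m : ℕ) (x y : V) : Prop :=
  ∀ j < l, x = q j → (y = q (j + 1) ↔ j ≠ m)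

variable {q l}

theorem leak_sub (r r' : V → V → ℝ) : leak q l (r - r') = leak q l r - leak q l r' := by
  simp [leak, sum_sub_distrib]

theorem leak_pathFlow_le {p : ℕ → V} {k m : ℕ} {δ : ℝ} (hinj : Set.InjOn p (Set.Iio k))
    (hδ : 0 ≤ δ) (hm : m ∈ Ico 1 l)
    (hexit : ∀ j < k, ∀ i ∈ Ico 1 l, i ≠ m → p j = q i → p (j + 1) = q (i + 1)) :
    leak q l (pathFlow p k δ) ≤ δ := by
  calc leak q l (pathFlow p k δ)
      = ∑ v ∈ univ.filter (fun v => v ≠ q (m + 1)), pathFlow p k δ (q m) v := by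
        refine sum_eq_single_of_mem m hm fun i hi him => sum_eq_zero fun v hv => ?_
        refine pathFlow_eq_zero ?_
        rintro j hj ⟨hpj, rfl⟩
        exact (mem_filter.1 hv).2 (hexit j hj i hi him hpj)
    _ ≤ ∑ v, pathFlow p k δ (q m) v :=
        sum_le_sum_of_subset_of_nonneg (filter_subset _ _) fun _ _ _ => pathFlow_nonneg hδ _ _
    _ ≤ δ := sum_pathFlow_right_le hinj hδ _

end Leak

namespace FlowNetwork.STFlow

variable {V : Type*} [Fintype V] [DecidableEq V] {N : FlowNetwork V} {q : ℕ → V} {l : ℕ}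

theorem hasStripPath_of_zero_edge (F : STFlow N) {m : ℕ} (hm : m < l)
    (hz : F.r (q m) (q (m + 1)) = 0) (hF : ∃ u v, 0 < F.r u v) :
    F.HasStripPath (Blocked q l) (fun p k => ¬ Subpath q l p k) := by
  obtain ⟨u, v, huv⟩ := hF
  obtain ⟨w, hw⟩ := F.exists_pos_from_source huv
  obtain ⟨p, k, h0, hk, hp⟩ := exists_isRelPath_of_reflTransGen <|
    F.reflTransGen_to_sink (fun _ _ => True) (fun _ _ ⟨y, hy⟩ => ⟨y, hy, trivial⟩) (.inr ⟨w, hw⟩)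
  replace hp : IsRelPath (fun a b => 0 < F.r a b) p k := hp.mono fun _ _ h => h.1
  have hq : ∀ j < k, ¬ (p j = q m ∧ p (j + 1) = q (m + 1)) := by
    rintro j hj ⟨h1, h2⟩
    simpa [h1, h2, hz] using hp j hj
  refine ⟨p, k, h0, hk, hp, ?_, fun δ _ _ => .inr ⟨m, hm, ?_⟩⟩
  · rintro ⟨o, hol, ho⟩
    exact hq (o + m) (by omega) ⟨ho m (by omega), ho (m + 1) (by omega)⟩
  · simp [hz, pathFlow_eq_zero hq]

theorem exists_isRelPath_exitsAt (F : STFlow N) (hl : 0 < l)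
    (hq : IsRelPath (fun u v => 0 < F.r u v) q l) {m : ℕ} {v₀ : V} (hv₀ : v₀ ≠ q (m + 1))
    (hpos : 0 < F.r (q m) v₀) :
    ∃ p k j, j < k ∧ p 0 = N.s ∧ p j = q 0 ∧ p k = N.t ∧
      IsRelPath (fun a b => 0 < F.r a b ∧ ExitsAt q l m a b) p k := by
  have hqpath := isPath_of_pos hq
  have hfwd : ReflTransGen (fun a b => 0 < F.r a b ∧ ExitsAt q l m a b) (q 0) N.t := by
    refine F.reflTransGen_to_sink _ (fun x _ ⟨y, hy⟩ => ?_) (.inr ⟨q 1, hq 0 hl⟩)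
    by_cases hx : ∃ j < l, x = q j
    · obtain ⟨j, hj, rfl⟩ := hx
      have huniq : ∀ i < l, q j = q i → i = j := fun i hi h =>
        hqpath.injOn (Set.mem_Iic.2 hi.le) (Set.mem_Iic.2 hj.le) h.symm
      by_cases hjm : j = m
      · subst hjm
        exact ⟨v₀, hpos, fun i hi h => by simpa [huniq i hi h] using hv₀⟩
      · exact ⟨q (j + 1), hq j hj, fun i hi h => by simp [huniq i hi h, hjm]⟩
    · exact ⟨y, hy, fun j hj h => absurd ⟨j, hj, h⟩ hx⟩
  -- Before `q 0` the path only visits vertices preceding `q 0`, none of them on `q`.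
  have hbwd : ReflTransGen (fun a b => 0 < F.r a b ∧ ExitsAt q l m a b) N.s (q 0) := by
    have hq0 : q 0 = N.s ∨ ∃ u, 0 < F.r u (q 0) :=
      or_iff_not_imp_left.2 (F.exists_pos_in_of_pos (hq 0 hl))
    refine ReflTransGen.mono (fun a b hab => ⟨hab.1, fun j hj ha => absurd hab.2 ?_⟩) _ _
      (F.reflTransGen_from_source hq0)
    have hab' : N.topo a < N.topo b := N.topo_lt _ (F.mem_E_of_pos hab.1)
    have hqj : N.topo (q 0) ≤ N.topo (q j) := hqpath.strictMonoOn_topo.monotoneOn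
      (Set.mem_Iic.2 (Nat.zero_le l)) (Set.mem_Iic.2 hj.le) (Nat.zero_le j)
    rw [ha] at hab'
    omega
  obtain ⟨p, k, j, hjk, h0, hpj, hk, hp⟩ := exists_isRelPath_through hbwd hfwd
  have hjk : j < k := hjk.lt_of_ne fun h => N.t_sink _ (hk ▸ h ▸ hpj ▸ hqpath 0 hl)
  exact ⟨p, k, j, hjk, h0, hpj, hk, hp⟩

theorem hasStripPath_of_leak (F : STFlow N) (hl : 0 < l)
    (hq : IsRelPath (fun u v => 0 < F.r u v) q l) (hle : F.r (q 0) (q 1) ≤ leak q l F.r) :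
    F.HasStripPath (Blocked q l) (fun p k => ¬ Subpath q l p k) := by
  obtain ⟨m, hm, v₀, hv₀, hpos⟩ :
      ∃ m ∈ Ico 1 l, ∃ v ∈ univ.filter (fun v => v ≠ q (m + 1)), 0 < F.r (q m) v := by
    obtain ⟨m, hm, hm'⟩ := exists_lt_of_sum_lt (f := fun _ => (0 : ℝ)) <| by
      simpa [leak] using (hq 0 hl).trans_le hle
    obtain ⟨v, hv, hv'⟩ := exists_lt_of_sum_lt (f := fun _ => (0 : ℝ)) (by simpa using hm')
    exact ⟨m, hm, v, hv, hv'⟩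
  have hm' := mem_Ico.1 hm
  obtain ⟨p, k, j, hjk, h0, hpj, hk, hp⟩ :=
    F.exists_isRelPath_exitsAt hl hq (mem_filter.1 hv₀).2 hpos
  have hpj1 : p (j + 1) = q 1 := ((hp j hjk).2 0 hl hpj).2 (by omega)
  have hppos : IsRelPath (fun a b => 0 < F.r a b) p k := hp.mono fun _ _ h => h.1
  refine ⟨p, k, h0, hk, hppos, ?_, fun δ hδ _ => .inl ?_⟩
  · rintro ⟨o, hol, ho⟩
    exact ((hp (o + m) (by omega)).2 m hm'.2 (ho m (by omega))).1 (ho (m + 1) (by omega)) rfl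
  · have h01 : δ ≤ pathFlow p k δ (q 0) (q 1) := hpj ▸ hpj1 ▸ le_pathFlow hδ hjk
    have hleak : leak q l (pathFlow p k δ) ≤ δ :=
      leak_pathFlow_le ((isPath_of_pos hppos).injOn.mono Set.Iio_subset_Iic_self) hδ hm
        fun i hi n hn hnm h => ((hp i hi).2 n (mem_Ico.1 hn).2 h).2 hnm
    rw [Pi.sub_apply, Pi.sub_apply, leak_sub]
    linarith

theorem hasStripPath_of_blocked (F : STFlow N) (hl : 0 < l) (hB : Blocked q l F.r)
    (hF : ∃ u v, 0 < F.r u v) : F.HasStripPath (Blocked q l) (fun p k => ¬ Subpath q l p k) := by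
  by_cases hz : ∃ m < l, F.r (q m) (q (m + 1)) = 0
  · obtain ⟨m, hm, hz⟩ := hz
    exact F.hasStripPath_of_zero_edge hm hz hF
  · exact F.hasStripPath_of_leak hl
      (fun j hj => (F.nonneg _ _).lt_of_ne fun h => hz ⟨j, hj, h.symm⟩) (hB.resolve_right hz)

end FlowNetwork.STFlow

variable {V : Type*} [Fintype V] [DecidableEq V]

theorem nonpos_excess_not_safe_general (N : FlowNetwork V) (q : ℕ → V) (l : ℕ)
    (hl : 2 ≤ l)
    (hexc : N.toFlowGraph.excess q l ≤ 0) :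
    ∃ D : N.Decomp, ∀ i, ¬ FlowNetwork.Subpath q l (D.path i) (D.len i) := by
  have hB : Blocked q l N.toSTFlow.r := .inl <| by
    rw [FlowGraph.excess_eq_sub_leak] at hexc
    exact sub_nonpos.1 hexc
  obtain ⟨P, hP, hgood⟩ := FlowNetwork.STFlow.exists_pathFamily
    (fun F hB hF => F.hasStripPath_of_blocked (by omega) hB hF) N.toSTFlow hB
  exact ⟨P.toDecomp hP, hgood⟩

/-- A path of length at least 2 with non-positive excess flow is not safe:
some flow decomposition contains it in none of its paths (provided decompositions exist). -/
theorem nonpos_excess_not_safe (N : FlowNetwork V) (q : ℕ → V) (l : ℕ)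
    (hl : 2 ≤ l) (hp : N.toFlowGraph.IsPath q l)
    (hexc : N.toFlowGraph.excess q l ≤ 0) (hne : Nonempty N.Decomp) :
    ∃ D : N.Decomp, ∀ i, ¬ FlowNetwork.Subpath q l (D.path i) (D.len i) :=
  nonpos_excess_not_safe_general N q l hl hexc
end

section
/- If a path P in a flow graph with unique source and sink is safe (has positive excess flow, f_P > 0) and has length at least 2, then for any internal vertex u of P with consecutive edges (x,u),(u,y) of P, we have f(x,u) > f_in(u) − f(u,y), i.e., f(x,u) + f(u,y) > f_in(u). -/
open scoped Classical

variable {V : Type*} [Fintype V] [DecidableEq V]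

/-- If a path with consecutive edges `(x,u), (u,y)` has positive excess flow, then
`f(x,u) + f(u,y) > f_in(u)`. -/
theorem safe_consecutive_edges (N : FlowNetwork V) (p : ℕ → V) (k : ℕ)
    (hp : N.toFlowGraph.IsPath p k) (hpos : 0 < N.toFlowGraph.excessB p k)
    (i : ℕ) (hi : i + 2 ≤ k) :
    N.toFlowGraph.flowIn (p (i + 1)) <
      N.f (p i) (p (i + 1)) + N.f (p (i + 1)) (p (i + 2)) := by
  have hnn : ∀ u v : V, 0 ≤ N.f u v := by
    intro u v
    by_cases h : (u, v) ∈ N.E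
    · exact le_of_lt (N.pos _ h)
    · rw [N.zero_off u v h]
  set term : ℕ → ℝ :=
    fun m => ∑ v ∈ Finset.univ.filter (fun v => v ≠ p (m - 1)), N.f v (p m) with hterm
  have htnn : ∀ m, 0 ≤ term m := fun m => Finset.sum_nonneg fun v _ => hnn v _
  have hteq : ∀ m, term m = N.toFlowGraph.flowIn (p m) - N.f (p (m - 1)) (p m) := by
    intro m
    rw [hterm]
    simp only
    rw [Finset.filter_ne', Finset.sum_erase_eq_sub (Finset.mem_univ _)]
    rfl
  have hcons : ∀ j, 1 ≤ j → j < k →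
      N.f (p j) (p (j + 1)) ≤ N.toFlowGraph.flowIn (p j) := by
    intro j h1 h2
    have hin : (p (j - 1), p j) ∈ N.E := by
      have h := hp (j - 1) (by omega)
      rwa [(by omega : j - 1 + 1 = j)] at h
    have hout : (p j, p (j + 1)) ∈ N.E := hp j h2
    have hc := N.conserve (p j) ⟨p (j - 1), hin⟩ ⟨p (j + 1), hout⟩
    have hle : N.f (p j) (p (j + 1)) ≤ ∑ w, N.f (p j) w :=
      Finset.single_le_sum (fun w _ => hnn (p j) w) (Finset.mem_univ _)
    calc N.f (p j) (p (j + 1)) ≤ ∑ w, N.f (p j) w := hle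
    _ = N.toFlowGraph.flowIn (p j) := hc.symm
  have main : ∀ d, i + 2 + d ≤ k →
      N.f (p (i + 1 + d)) (p (i + 2 + d)) - ∑ m ∈ Finset.Ico (i + 1) (i + 2 + d), term m
      ≤ N.f (p (i + 1)) (p (i + 2)) - term (i + 1) := by
    intro d
    induction d with
    | zero =>
        intro _
        rw [(by omega : i + 2 + 0 = (i + 1) + 1),
          Finset.sum_Ico_succ_top (le_refl _), Finset.Ico_self, Finset.sum_empty]
        simp
    | succ d ih =>
        intro hd
        have e1 : i + 1 + (d + 1) = i + 2 + d := by omega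
        have e2 : i + 2 + (d + 1) = i + 2 + d + 1 := by omega
        rw [e1, e2, Finset.sum_Ico_succ_top (by omega : i + 1 ≤ i + 2 + d)]
        have h1 := hcons (i + 2 + d) (by omega) (by omega)
        have h2 := hteq (i + 2 + d)
        rw [(by omega : i + 2 + d - 1 = i + 1 + d)] at h2
        have ih' := ih (by omega)
        linarith
  have hmain := main (k - (i + 2)) (by omega)
  rw [(by omega : i + 1 + (k - (i + 2)) = k - 1),
    (by omega : i + 2 + (k - (i + 2)) = k)] at hmain
  have hEs : N.toFlowGraph.excessB p k
      = N.f (p (k - 1)) (p k) - ∑ m ∈ Finset.Ico 1 k, term m := rfl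
  rw [hEs] at hpos
  have hsplit2 : ∑ m ∈ Finset.Ico 1 (i + 1), term m + ∑ m ∈ Finset.Ico (i + 1) k, term m
      = ∑ m ∈ Finset.Ico 1 k, term m :=
    Finset.sum_Ico_consecutive _ (by omega) (by omega)
  have hnn2 : 0 ≤ ∑ m ∈ Finset.Ico 1 (i + 1), term m :=
    Finset.sum_nonneg fun m _ => htnn m
  have hti := hteq (i + 1)
  rw [(by omega : i + 1 - 1 = i)] at hti
  linarith
end

section
/- If (u,v) is an edge of a flow graph and (v,w) is an out-edge of v with f(u,v) + f(v,w) > f_in(v) (equivalently f(u,v) > f_in(v) − f(v,w)), then the two-edge path (u,v,w) has positive excess flow and hence is safe. -/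
open scoped Classical

variable {V : Type*} [Fintype V] [DecidableEq V]

/-- Along a path, the topological order strictly increases. -/
lemma path_topo_lt {G : FlowGraph V} {p : ℕ → V} {k : ℕ} (hp : G.IsPath p k) :
    ∀ a b, a < b → b ≤ k → G.topo (p a) < G.topo (p b) := by
  intro a b
  induction b with
  | zero => omega
  | succ n ih =>
    intro hab hbk
    have hedge := hp n (by omega)
    have h2 := G.topo_lt _ hedge
    rcases Nat.lt_or_ge a n with h | h
    · exact lt_trans (ih h (by omega)) h2
    · have : a = n := by omega
      subst this; exact h2

/-- Vertices along a path are pairwise distinct. -/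
lemma path_inj {G : FlowGraph V} {p : ℕ → V} {k : ℕ} (hp : G.IsPath p k)
    {a b : ℕ} (ha : a ≤ k) (hb : b ≤ k) (h : p a = p b) : a = b := by
  rcases Nat.lt_trichotomy a b with h' | h' | h'
  · exact absurd (congrArg G.topo h) (ne_of_lt (path_topo_lt hp a b h' hb))
  · exact h'
  · exact absurd (congrArg G.topo h.symm) (ne_of_lt (path_topo_lt hp b a h' ha))

/-- The total weight of decomposition paths using a given pair as an edge equals
its flow (also for non-edges, where both sides vanish). -/
lemma decomp_edge_weight (N : FlowNetwork V) (D : N.Decomp) (a b : V) :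
    (∑ i, if (∃ j < D.len i, D.path i j = a ∧ D.path i (j + 1) = b) then D.w i else 0)
      = N.f a b := by
  by_cases hE : (a, b) ∈ N.E
  · rw [← D.covers (a, b) hE]
    refine Finset.sum_congr rfl fun i _ => ?_
    by_cases hex : ∃ j < D.len i, D.path i j = a ∧ D.path i (j + 1) = b
    · obtain ⟨j, hj, hja, hjb⟩ := hex
      rw [if_pos ⟨j, hj, hja, hjb⟩]
      symm
      rw [Finset.sum_eq_single_of_mem j (Finset.mem_range.mpr hj)
        (fun j' hj' hne => ?_), if_pos ⟨hja, hjb⟩]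
      rw [if_neg]
      rintro ⟨_, hb'⟩
      have hj'le : j' + 1 ≤ D.len i := Finset.mem_range.mp hj'
      exact hne (Nat.succ_injective (path_inj (D.is_path i) hj'le hj (hb'.trans hjb.symm)))
    · rw [if_neg hex]
      refine (Finset.sum_eq_zero fun j' hj' => ?_).symm
      rw [if_neg]
      exact fun h => hex ⟨j', Finset.mem_range.mp hj', h⟩
  · rw [N.zero_off a b hE]
    refine Finset.sum_eq_zero fun i _ => ?_
    rw [if_neg]
    rintro ⟨j, hj, hja, hjb⟩
    exact hE (by rw [← hja, ← hjb]; exact D.is_path i j hj)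

/-- The total weight of decomposition paths entering `v` equals the flow into `v`,
provided `v` is not the source (i.e. has some incoming edge). -/
lemma decomp_in_weight (N : FlowNetwork V) (D : N.Decomp) (v : V) :
    (∑ i, if (∃ j < D.len i, D.path i (j + 1) = v) then D.w i else 0)
      = N.toFlowGraph.flowIn v := by
  unfold FlowGraph.flowIn
  have : ∀ a : V, N.f a v
      = ∑ i, if (∃ j < D.len i, D.path i j = a ∧ D.path i (j + 1) = v) then D.w i else 0 :=
    fun a => (decomp_edge_weight N D a v).symm
  simp only [this]
  rw [Finset.sum_comm]
  refine Finset.sum_congr rfl fun i _ => ?_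
  by_cases hex : ∃ j < D.len i, D.path i (j + 1) = v
  · obtain ⟨j, hj, hjv⟩ := hex
    rw [if_pos ⟨j, hj, hjv⟩]
    rw [Finset.sum_eq_single_of_mem (D.path i j) (Finset.mem_univ _)
      (fun a' _ hne => ?_), if_pos ⟨j, hj, rfl, hjv⟩]
    rw [if_neg]
    rintro ⟨j', hj', hja', hjb'⟩
    have := path_inj (D.is_path i) (Nat.succ_le_of_lt hj')
      (Nat.succ_le_of_lt hj) (hjb'.trans hjv.symm)
    exact hne (by rw [← hja', Nat.succ_injective this])
  · rw [if_neg hex]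
    refine (Finset.sum_eq_zero fun a _ => ?_).symm
    rw [if_neg]
    rintro ⟨j, hj, _, hjv⟩
    exact hex ⟨j, hj, hjv⟩

/-- If `(u,v)` and `(v,w)` are edges with `f(u,v) + f(v,w) > f_in(v)`, then the
two-edge path `(u,v,w)` has positive excess flow and hence is safe. -/
theorem two_edge_path_safe (N : FlowNetwork V) (u v w : V)
    (h1 : (u, v) ∈ N.E) (h2 : (v, w) ∈ N.E)
    (h3 : N.toFlowGraph.flowIn v < N.f u v + N.f v w) :
    0 < N.toFlowGraph.excess (fun i => if i = 0 then u else if i = 1 then v else w) 2 ∧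
    FlowNetwork.SafePath N (fun i => if i = 0 then u else if i = 1 then v else w) 2 := by
  set q : ℕ → V := fun i => if i = 0 then u else if i = 1 then v else w with hq
  have hcons : N.toFlowGraph.flowIn v = N.toFlowGraph.flowOut v :=
    N.conserve v ⟨u, h1⟩ ⟨w, h2⟩
  have hexcess : N.toFlowGraph.excess q 2 = N.f u v + N.f v w - N.toFlowGraph.flowIn v := by
    unfold FlowGraph.excess
    have hIco : Finset.Ico 1 2 = {1} := rfl
    rw [hIco, Finset.sum_singleton]
    have h12 : q 1 = v := rfl
    have h22 : q (1 + 1) = w := rfl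
    rw [h12, h22]
    have hfilter : Finset.univ.filter (fun x => x ≠ w) = Finset.univ.erase w :=
      Finset.filter_ne' Finset.univ w
    rw [hfilter, Finset.sum_erase_eq_sub (Finset.mem_univ w)]
    have : (∑ x, N.f v x) = N.toFlowGraph.flowOut v := rfl
    rw [this, ← hcons]
    have hq0 : q 0 = u := rfl
    rw [hq0]
    ring
  have hpos : 0 < N.toFlowGraph.excess q 2 := by rw [hexcess]; linarith
  refine ⟨hpos, ?_⟩
  intro D
  -- indicator weights
  have hA : (∑ i, if (∃ j < D.len i, D.path i j = u ∧ D.path i (j + 1) = v) then D.w i else 0)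
      = N.f u v := decomp_edge_weight N D u v
  have hB : (∑ i, if (∃ j < D.len i, D.path i j = v ∧ D.path i (j + 1) = w) then D.w i else 0)
      = N.f v w := decomp_edge_weight N D v w
  have hIn : (∑ i, if (∃ j < D.len i, D.path i (j + 1) = v) then D.w i else 0)
      = N.toFlowGraph.flowIn v := decomp_in_weight N D v
  have hsv : N.s ≠ v := fun h => N.s_source u (h ▸ h1)
  -- pointwise inequality
  have hpt : ∀ i : Fin D.n,
      (if (∃ j < D.len i, D.path i j = u ∧ D.path i (j + 1) = v) then D.w i else 0)
      + (if (∃ j < D.len i, D.path i j = v ∧ D.path i (j + 1) = w) then D.w i else 0)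
      ≤ (if ((∃ j < D.len i, D.path i j = u ∧ D.path i (j + 1) = v)
            ∧ (∃ j < D.len i, D.path i j = v ∧ D.path i (j + 1) = w)) then D.w i else 0)
      + (if (∃ j < D.len i, D.path i (j + 1) = v) then D.w i else 0) := by
    intro i
    have hw := le_of_lt (D.w_pos i)
    by_cases hA' : ∃ j < D.len i, D.path i j = u ∧ D.path i (j + 1) = v
    · have hEnt : ∃ j < D.len i, D.path i (j + 1) = v := by
        obtain ⟨j, hj, _, hjv⟩ := hA'; exact ⟨j, hj, hjv⟩
      by_cases hB' : ∃ j < D.len i, D.path i j = v ∧ D.path i (j + 1) = w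
      · simp [hA', hB', hEnt]
      · simp [hA', hB', hEnt]
    · by_cases hB' : ∃ j < D.len i, D.path i j = v ∧ D.path i (j + 1) = w
      · have hEnt : ∃ j < D.len i, D.path i (j + 1) = v := by
          obtain ⟨j, hj, hjv, _⟩ := hB'
          have hj0 : j ≠ 0 := by
            intro h0
            exact hsv ((D.starts i).symm.trans (h0 ▸ hjv))
          refine ⟨j - 1, by omega, ?_⟩
          have : j - 1 + 1 = j := by omega
          rw [this]; exact hjv
        simp [hA', hB', hEnt, hw]
      · simp only [if_neg hA', if_neg hB']
        have : ¬ ((∃ j < D.len i, D.path i j = u ∧ D.path i (j + 1) = v)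
            ∧ (∃ j < D.len i, D.path i j = v ∧ D.path i (j + 1) = w)) := fun h => hA' h.1
        rw [if_neg this]
        split_ifs <;> linarith [le_of_lt (D.w_pos i)]
  have hsum : N.f u v + N.f v w ≤
      (∑ i, if ((∃ j < D.len i, D.path i j = u ∧ D.path i (j + 1) = v)
            ∧ (∃ j < D.len i, D.path i j = v ∧ D.path i (j + 1) = w)) then D.w i else 0)
      + N.toFlowGraph.flowIn v := by
    rw [← hA, ← hB, ← hIn, ← Finset.sum_add_distrib, ← Finset.sum_add_distrib]
    exact Finset.sum_le_sum fun i _ => hpt i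
  have hposAB : 0 < ∑ i, if ((∃ j < D.len i, D.path i j = u ∧ D.path i (j + 1) = v)
            ∧ (∃ j < D.len i, D.path i j = v ∧ D.path i (j + 1) = w)) then D.w i else 0 := by
    linarith
  obtain ⟨i, _, hi⟩ := Finset.exists_ne_zero_of_sum_ne_zero (ne_of_gt hposAB)
  have hAB : (∃ j < D.len i, D.path i j = u ∧ D.path i (j + 1) = v)
      ∧ (∃ j < D.len i, D.path i j = v ∧ D.path i (j + 1) = w) := by
    by_contra h
    exact hi (if_neg h)
  obtain ⟨⟨j1, hj1, hj1u, hj1v⟩, ⟨j2, hj2, hj2v, hj2w⟩⟩ := hAB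
  have heq : j1 + 1 = j2 :=
    path_inj (D.is_path i) (Nat.succ_le_of_lt hj1) (le_of_lt hj2) (hj1v.trans hj2v.symm)
  refine ⟨i, j1, by omega, ?_⟩
  intro j hj
  interval_cases j
  · simpa [hq] using hj1u
  · simpa [hq] using hj1v
  · have : j1 + 2 = j2 + 1 := by omega
    rw [this]
    simpa [hq] using hj2w
end
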